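/- arXiv:2401.11310 — 2 statements merged into one kernel-verified Lean document; each statement's English description precedes it below -/
import Mathlib

section
/- Let X be a compact metric space, (x_i) a sequence of points of X, (p_i) a fast growing sequence, and z = z((p_i),(x_i)) the associated Oxtoby sequence. Let j ≥ i be natural numbers and k, k' ∈ ℤ. If [k p_i, (k+1) p_i) ⊆ [k' p_j, (k'+1) p_j), then either [k p_i, (k+1) p_i) ⊆ Per_{p_j}(z) or J(j,k') ∩ [k p_i, (k+1) p_i) = J(i,k). -/
open Filter Topology

section Defs

variable {X : Type*}

/-- The shift by `m`: `(shiftZ m z) n = z (n + m)`, so `shiftZ 1` is the left shift `S`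
and `shiftZ m = S^m`. -/
def shiftZ (m : ℤ) (z : ℤ → X) : ℤ → X := fun n => z (n + m)

/-- `Per_p(z)`: the set of positions `n` such that `z m = z n` for all `m ≡ n (mod p)`. -/
def PerSet (p : ℕ) (z : ℤ → X) : Set ℤ :=
  {n : ℤ | ∀ m : ℤ, (p : ℤ) ∣ m - n → z m = z n}

/-- `Per(z) = ⋃_{p ≥ 1} Per_p(z)`. -/
def PerFull (z : ℤ → X) : Set ℤ := {n : ℤ | ∃ p : ℕ, 1 ≤ p ∧ n ∈ PerSet p z}

/-- A Toeplitz sequence: every position is periodic. -/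
def IsToeplitz (z : ℤ → X) : Prop := ∀ n : ℤ, n ∈ PerFull z

/-- A non-periodic sequence: `S^m z ≠ z` for all `m ≠ 0`. -/
def NonPeriodicSeq (z : ℤ → X) : Prop := ∀ m : ℤ, m ≠ 0 → shiftZ m z ≠ z

/-- `u` and `v` have the same `p`-skeleton. -/
def SamePSkeleton (p : ℕ) (u v : ℤ → X) : Prop :=
  PerSet p u = PerSet p v ∧ ∀ n ∈ PerSet p u, u n = v n

/-- A period structure of a (non-periodic) Toeplitz sequence `z`. -/
def IsPeriodStructure (p : ℕ → ℕ) (z : ℤ → X) : Prop :=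
  (∀ i, 1 ≤ p i) ∧
  (∀ i q, 1 ≤ q → q < p i → PerSet q z ≠ PerSet (p i) z) ∧
  (∀ i, p i ∣ p (i + 1)) ∧
  (∀ n : ℤ, ∃ i, n ∈ PerSet (p i) z)

/-- A fast growing sequence of positive integers. -/
def FastGrowing (p : ℕ → ℕ) : Prop :=
  p 0 = 1 ∧ (∀ i, p i ∣ p (i + 1)) ∧ 3 ≤ p 1 ∧ ∀ i, 3 * p i ≤ p (i + 1)

/-- `oxDefined p i` is the set of positions of the Oxtoby sequence that are filled in
after step `i` of the inductive construction (step `i+1` fills, for each `k ≡ 0` or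
`-1 (mod p_{i+1}/p_i)`, the still-empty positions `J(i,k)` of the block
`[k p_i, (k+1) p_i)`). -/
def oxDefined (p : ℕ → ℕ) : ℕ → Set ℤ
  | 0 => ∅
  | i + 1 =>
      oxDefined p i ∪
        {n : ℤ | ∃ k : ℤ,
          (((p (i + 1) / p i : ℕ) : ℤ) ∣ k ∨ ((p (i + 1) / p i : ℕ) : ℤ) ∣ (k + 1)) ∧
          k * (p i : ℤ) ≤ n ∧ n < (k + 1) * (p i : ℤ) ∧ n ∉ oxDefined p i}

/-- `J(i,k)`: the set of positions in `[k p_i, (k+1) p_i)` still undefined after step `i`. -/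
def oxJ (p : ℕ → ℕ) (i : ℕ) (k : ℤ) : Set ℤ :=
  {n : ℤ | k * (p i : ℤ) ≤ n ∧ n < (k + 1) * (p i : ℤ) ∧ n ∉ oxDefined p i}

/-- The Oxtoby sequence `z((p_i),(x_i))`: position `n` receives the value `x_i` where `i`
is the first step after which `n` is defined. -/
noncomputable def oxtoby (p : ℕ → ℕ) (x : ℕ → X) : ℤ → X :=
  fun n => x (sInf {i : ℕ | n ∈ oxDefined p i})

/-- The reverse of a bi-infinite sequence: `x⁻¹(n) = x(-n)`. -/
def revSeq (z : ℤ → X) : ℤ → X := fun n => z (-n)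

/-- `[n0, n1]` is a maximal `p`-periodic block in `x`. -/
def IsMaxPeriodicBlock (p : ℕ) (x : ℤ → X) (n0 n1 : ℤ) : Prop :=
  n0 ≤ n1 ∧ Set.Icc n0 n1 ⊆ PerSet p x ∧
    ∀ n0' n1' : ℤ, n0' ≤ n0 → n1 ≤ n1' → Set.Icc n0' n1' ⊆ PerSet p x →
      n0' = n0 ∧ n1' = n1

variable [TopologicalSpace X]

/-- The orbit closure of `z` in `X^ℤ` with the product topology. -/
def orbitClosure (z : ℤ → X) : Set (ℤ → X) :=
  closure {y : ℤ → X | ∃ m : ℤ, y = shiftZ m z}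

/-- The ω-limit set of a sequence: all limits of convergent subsequences. -/
def omegaLimitSet (x : ℕ → X) : Set X :=
  {a : X | ∃ φ : ℕ → ℕ, StrictMono φ ∧ Tendsto (x ∘ φ) atTop (𝓝 a)}

/-- Two sequences have the same topological type if exactly the same subsequences
converge. -/
def SameTopType {Y : Type*} [TopologicalSpace Y] (x : ℕ → X) (y : ℕ → Y) : Prop :=
  ∀ φ : ℕ → ℕ, StrictMono φ →
    ((∃ a, Tendsto (x ∘ φ) atTop (𝓝 a)) ↔ (∃ a, Tendsto (y ∘ φ) atTop (𝓝 a)))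

/-- `f` is a conjugacy between the shift-invariant sets `A` and `B`: a homeomorphism
from `A` onto `B` commuting with the shift. -/
def IsConjugacy (A B : Set (ℤ → X)) (f : (ℤ → X) → (ℤ → X)) : Prop :=
  Set.MapsTo f A B ∧ ContinuousOn f A ∧
    (∃ g : (ℤ → X) → (ℤ → X), Set.MapsTo g B A ∧ ContinuousOn g B ∧
      (∀ a ∈ A, g (f a) = a) ∧ (∀ b ∈ B, f (g b) = b)) ∧
    ∀ a ∈ A, f (shiftZ 1 a) = shiftZ 1 (f a)

/-- The `m`-th iterate (for `m : ℤ`) of a self-homeomorphism. -/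
def iterZ {Y : Type*} [TopologicalSpace Y] (f : Y ≃ₜ Y) (m : ℤ) (a : Y) : Y :=
  ((f.toEquiv ^ m : Equiv.Perm Y)) a

end Defs

section OxAux

lemma fg_pos {p : ℕ → ℕ} (hp : FastGrowing p) : ∀ i, 1 ≤ p i := by
  intro i
  induction i with
  | zero => exact le_of_eq hp.1.symm
  | succ n ih => have := hp.2.2.2 n; omega

lemma fg_dvd {p : ℕ → ℕ} (hp : FastGrowing p) {i j : ℕ} (h : i ≤ j) : p i ∣ p j := by
  induction j, h using Nat.le_induction with
  | base => exact dvd_rfl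
  | succ j hij ih => exact ih.trans (hp.2.1 j)

lemma oxDefined_succ (p : ℕ → ℕ) (l : ℕ) :
    oxDefined p (l + 1) = oxDefined p l ∪
      {n : ℤ | ∃ k : ℤ,
        (((p (l + 1) / p l : ℕ) : ℤ) ∣ k ∨ ((p (l + 1) / p l : ℕ) : ℤ) ∣ (k + 1)) ∧
        k * (p l : ℤ) ≤ n ∧ n < (k + 1) * (p l : ℤ) ∧ n ∉ oxDefined p l} := rfl

lemma oxDefined_mono (p : ℕ → ℕ) {i j : ℕ} (h : i ≤ j) :
    oxDefined p i ⊆ oxDefined p j := by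
  induction j, h using Nat.le_induction with
  | base => exact subset_rfl
  | succ j hij ih =>
    refine ih.trans ?_
    rw [oxDefined_succ]
    exact Set.subset_union_left

lemma oxDefined_shift (p : ℕ → ℕ) (hpd : ∀ i, p i ∣ p (i + 1)) :
    ∀ (l : ℕ) (n t : ℤ), n ∈ oxDefined p l → n + t * (p l : ℤ) ∈ oxDefined p l := by
  intro l
  induction l with
  | zero => intro n t h; simp [oxDefined] at h
  | succ l ih =>
    intro n t h
    have hq : (p (l + 1) : ℤ) = ((p (l + 1) / p l : ℕ) : ℤ) * (p l : ℤ) := by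
      rw [← Nat.cast_mul, Nat.div_mul_cancel (hpd l)]
    set q : ℤ := ((p (l + 1) / p l : ℕ) : ℤ) with hqdef
    rw [oxDefined_succ] at h ⊢
    rcases h with h | ⟨k, hk, h1, h2, h3⟩
    · left
      have e : n + t * (p (l + 1) : ℤ) = n + (t * q) * (p l : ℤ) := by rw [hq]; ring
      rw [e]; exact ih n (t * q) h
    · right
      refine ⟨k + t * q, ?_, ?_, ?_, ?_⟩
      · rcases hk with hk | hk
        · exact Or.inl (dvd_add hk (dvd_mul_left q t))
        · refine Or.inr ?_
          have e : k + t * q + 1 = (k + 1) + t * q := by ring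
          rw [e]; exact dvd_add hk (dvd_mul_left q t)
      · have e : (k + t * q) * (p l : ℤ) = k * (p l : ℤ) + t * (q * (p l : ℤ)) := by ring
        rw [e, ← hq]; linarith
      · have e : (k + t * q + 1) * (p l : ℤ) = (k + 1) * (p l : ℤ) + t * (q * (p l : ℤ)) := by
          ring
        rw [e, ← hq]; linarith
      · intro hc
        have h' := ih (n + t * (p (l + 1) : ℤ)) (-(t * q)) hc
        have e : n + t * (p (l + 1) : ℤ) + (-(t * q)) * (p l : ℤ) = n := by rw [hq]; ring
        rw [e] at h'
        exact h3 h'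

lemma oxDefined_shift_iff (p : ℕ → ℕ) (hpd : ∀ i, p i ∣ p (i + 1))
    (l : ℕ) (n t : ℤ) : n + t * (p l : ℤ) ∈ oxDefined p l ↔ n ∈ oxDefined p l := by
  constructor
  · intro h
    have h' := oxDefined_shift p hpd l _ (-t) h
    have e : n + t * (p l : ℤ) + (-t) * (p l : ℤ) = n := by ring
    rwa [e] at h'
  · exact oxDefined_shift p hpd l n t

lemma mem_perSet_of_defined {X : Type*} (x : ℕ → X) {p : ℕ → ℕ} (hp : FastGrowing p)
    {L : ℕ} {n : ℤ} (h : n ∈ oxDefined p L) : n ∈ PerSet (p L) (oxtoby p x) := by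
  intro m hdvd
  obtain ⟨t, ht⟩ := hdvd
  have hm : m = n + t * (p L : ℤ) := by linarith
  subst hm
  unfold oxtoby
  congr 1
  have key : ∀ l ≤ L, (n + t * (p L : ℤ) ∈ oxDefined p l ↔ n ∈ oxDefined p l) := by
    intro l hl
    obtain ⟨c, hc⟩ := fg_dvd hp hl
    have hcast : (p L : ℤ) = (p l : ℤ) * (c : ℤ) := by exact_mod_cast hc
    have e : n + t * (p L : ℤ) = n + (t * c) * (p l : ℤ) := by rw [hcast]; ring
    rw [e]
    exact oxDefined_shift_iff p hp.2.1 l n (t * c)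
  have hmL : n + t * (p L : ℤ) ∈ oxDefined p L := (key L le_rfl).mpr h
  have hne1 : {l : ℕ | n + t * (p L : ℤ) ∈ oxDefined p l}.Nonempty := ⟨L, hmL⟩
  have hne2 : {l : ℕ | n ∈ oxDefined p l}.Nonempty := ⟨L, h⟩
  have hmem1 := Nat.sInf_mem hne1
  have hmem2 := Nat.sInf_mem hne2
  have hle1 : sInf {l : ℕ | n + t * (p L : ℤ) ∈ oxDefined p l} ≤ L := Nat.sInf_le hmL
  have hle2 : sInf {l : ℕ | n ∈ oxDefined p l} ≤ L := Nat.sInf_le h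
  apply le_antisymm
  · exact Nat.sInf_le ((key _ hle2).mpr hmem2)
  · exact Nat.sInf_le ((key _ hle1).mp hmem1)

lemma ox_stepA (p : ℕ → ℕ) (j : ℕ) (k : ℤ)
    (hdv : ((p (j + 1) / p j : ℕ) : ℤ) ∣ k ∨ ((p (j + 1) / p j : ℕ) : ℤ) ∣ (k + 1)) :
    Set.Ico (k * (p j : ℤ)) ((k + 1) * (p j : ℤ)) ⊆ oxDefined p (j + 1) := by
  intro n hn
  rw [oxDefined_succ]
  by_cases h : n ∈ oxDefined p j
  · exact Or.inl h
  · exact Or.inr ⟨k, hdv, hn.1, hn.2, h⟩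

lemma ox_stepB (p : ℕ → ℕ) (j : ℕ) (hpos : 1 ≤ p j) (k : ℤ)
    (h1 : ¬ ((p (j + 1) / p j : ℕ) : ℤ) ∣ k)
    (h2 : ¬ ((p (j + 1) / p j : ℕ) : ℤ) ∣ (k + 1))
    {n : ℤ} (hn1 : k * (p j : ℤ) ≤ n) (hn2 : n < (k + 1) * (p j : ℤ)) :
    n ∈ oxDefined p (j + 1) ↔ n ∈ oxDefined p j := by
  constructor
  · intro h
    rw [oxDefined_succ] at h
    rcases h with h | ⟨k₁, hdv, a1, a2, a3⟩
    · exact h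
    · exfalso
      have hpj : (0 : ℤ) < (p j : ℤ) := by exact_mod_cast hpos
      have hk : k₁ = k := by
        have l1 : k₁ < k + 1 := lt_of_mul_lt_mul_right (lt_of_le_of_lt a1 hn2) hpj.le
        have l2 : k < k₁ + 1 := lt_of_mul_lt_mul_right (lt_of_le_of_lt hn1 a2) hpj.le
        omega
      subst hk
      rcases hdv with hdv | hdv
      exacts [h1 hdv, h2 hdv]
  · exact fun h => oxDefined_mono p (Nat.le_succ j) h

lemma perSet_mono {X : Type*} (z : ℤ → X) {a b : ℕ} (h : a ∣ b) :
    PerSet a z ⊆ PerSet b z := by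
  intro n hn m hm
  exact hn m (dvd_trans (Int.natCast_dvd_natCast.mpr h) hm)

lemma ox_main {X : Type*} (x : ℕ → X) (p : ℕ → ℕ) (hp : FastGrowing p) (i : ℕ) :
    ∀ j, i ≤ j → ∀ k k' : ℤ,
      Set.Ico (k * (p i : ℤ)) ((k + 1) * (p i : ℤ)) ⊆
        Set.Ico (k' * (p j : ℤ)) ((k' + 1) * (p j : ℤ)) →
      Set.Ico (k * (p i : ℤ)) ((k + 1) * (p i : ℤ)) ⊆ PerSet (p j) (oxtoby p x) ∨
        oxJ p j k' ∩ Set.Ico (k * (p i : ℤ)) ((k + 1) * (p i : ℤ)) = oxJ p i k := by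
  have hpi : (0 : ℤ) < (p i : ℤ) := by exact_mod_cast fg_pos hp i
  intro j hij
  induction j, hij using Nat.le_induction with
  | base =>
    intro k k' hsub
    right
    have hmem : k * (p i : ℤ) ∈ Set.Ico (k * (p i : ℤ)) ((k + 1) * (p i : ℤ)) :=
      ⟨le_refl _, by linarith [mul_lt_mul_of_pos_right (lt_add_one k) hpi]⟩
    obtain ⟨hA1, hA2⟩ := hsub hmem
    have hk : k' = k := by
      have l1 : k' ≤ k := le_of_mul_le_mul_right hA1 hpi
      have l2 : k < k' + 1 := lt_of_mul_lt_mul_right hA2 hpi.le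
      omega
    subst hk
    apply Set.inter_eq_left.mpr
    intro n hn
    exact ⟨hn.1, hn.2.1⟩
  | succ j hij IH =>
    intro k k' hsub
    have hpj : (0 : ℤ) < (p j : ℤ) := by exact_mod_cast fg_pos hp j
    obtain ⟨rn, hrn⟩ := fg_dvd hp hij
    have hr : (p j : ℤ) = (p i : ℤ) * (rn : ℤ) := by exact_mod_cast hrn
    set r : ℤ := (rn : ℤ) with hrdef
    have hrpos : 0 < r := by nlinarith
    set q : ℤ := ((p (j + 1) / p j : ℕ) : ℤ) with hqdef
    have hq : (p (j + 1) : ℤ) = q * (p j : ℤ) := by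
      rw [hqdef, ← Nat.cast_mul, Nat.div_mul_cancel (hp.2.1 j)]
    obtain ⟨k'', hkl, hku⟩ : ∃ k'' : ℤ, k'' * r ≤ k ∧ k < (k'' + 1) * r := by
      refine ⟨k / r, ?_, ?_⟩
      · have hed := Int.mul_ediv_add_emod k r
        have hm0 : 0 ≤ k % r := Int.emod_nonneg k (ne_of_gt hrpos)
        linarith
      · have hed := Int.mul_ediv_add_emod k r
        have hm1 : k % r < r := Int.emod_lt_of_pos k hrpos
        linarith
    have hB1 : k'' * (p j : ℤ) ≤ k * (p i : ℤ) := by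
      rw [hr]
      nlinarith [mul_le_mul_of_nonneg_right hkl hpi.le]
    have hB2 : (k + 1) * (p i : ℤ) ≤ (k'' + 1) * (p j : ℤ) := by
      rw [hr]
      nlinarith [mul_le_mul_of_nonneg_right (show k + 1 ≤ (k'' + 1) * r by linarith) hpi.le]
    have hBsub : Set.Ico (k * (p i : ℤ)) ((k + 1) * (p i : ℤ)) ⊆
        Set.Ico (k'' * (p j : ℤ)) ((k'' + 1) * (p j : ℤ)) :=
      fun n hn => ⟨le_trans hB1 hn.1, lt_of_lt_of_le hn.2 hB2⟩
    have hmem : k * (p i : ℤ) ∈ Set.Ico (k * (p i : ℤ)) ((k + 1) * (p i : ℤ)) :=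
      ⟨le_refl _, by linarith [mul_lt_mul_of_pos_right (lt_add_one k) hpi]⟩
    obtain ⟨hA1, hA2⟩ := hsub hmem
    obtain ⟨hD1, hD2⟩ := hBsub hmem
    have hC1 : k' * q ≤ k'' := by
      have e : k' * (p (j + 1) : ℤ) = (k' * q) * (p j : ℤ) := by rw [hq]; ring
      have h' : (k' * q) * (p j : ℤ) < (k'' + 1) * (p j : ℤ) := by
        rw [← e]; exact lt_of_le_of_lt hA1 hD2
      have := lt_of_mul_lt_mul_right h' hpj.le
      omega
    have hC2 : k'' + 1 ≤ (k' + 1) * q := by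
      have e : (k' + 1) * (p (j + 1) : ℤ) = ((k' + 1) * q) * (p j : ℤ) := by rw [hq]; ring
      have h' : k'' * (p j : ℤ) < ((k' + 1) * q) * (p j : ℤ) := by
        rw [← e]; exact lt_of_le_of_lt hD1 hA2
      have := lt_of_mul_lt_mul_right h' hpj.le
      omega
    have hBsub2 : Set.Ico (k'' * (p j : ℤ)) ((k'' + 1) * (p j : ℤ)) ⊆
        Set.Ico (k' * (p (j + 1) : ℤ)) ((k' + 1) * (p (j + 1) : ℤ)) := by
      intro n hn
      constructor
      · have : k' * (p (j + 1) : ℤ) ≤ k'' * (p j : ℤ) := by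
          rw [hq]
          nlinarith [mul_le_mul_of_nonneg_right hC1 hpj.le]
        linarith [hn.1]
      · have : (k'' + 1) * (p j : ℤ) ≤ (k' + 1) * (p (j + 1) : ℤ) := by
          rw [hq]
          nlinarith [mul_le_mul_of_nonneg_right hC2 hpj.le]
        linarith [hn.2]
    rcases IH k k'' hBsub with hper | hJ
    · left
      exact fun n hn => perSet_mono _ (hp.2.1 j) (hper hn)
    · by_cases hdv : q ∣ k'' ∨ q ∣ (k'' + 1)
      · left
        intro n hn
        exact mem_perSet_of_defined x hp (ox_stepA p j k'' hdv (hBsub hn))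
      · right
        push_neg at hdv
        have hstp : ∀ n, k'' * (p j : ℤ) ≤ n → n < (k'' + 1) * (p j : ℤ) →
            (n ∈ oxDefined p (j + 1) ↔ n ∈ oxDefined p j) :=
          fun n h1 h2 => ox_stepB p j (fg_pos hp j) k'' hdv.1 hdv.2 h1 h2
        rw [← hJ]
        ext n
        simp only [Set.mem_inter_iff, oxJ, Set.mem_setOf_eq, Set.mem_Ico]
        constructor
        · rintro ⟨⟨c1, c2, hnd⟩, hnB⟩
          have hB' := hBsub hnB
          exact ⟨⟨hB'.1, hB'.2, fun hc => hnd (oxDefined_mono p (Nat.le_succ j) hc)⟩, hnB⟩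
        · rintro ⟨⟨b1, b2, hndj⟩, hnB⟩
          have hB2' := hBsub2 ⟨b1, b2⟩
          exact ⟨⟨hB2'.1, hB2'.2, fun hc => hndj ((hstp n b1 b2).mp hc)⟩, hnB⟩

end OxAux

/-- Lemma `OL1`: for the Oxtoby sequence `z`, if
`[k p_i, (k+1) p_i) ⊆ [k' p_j, (k'+1) p_j)` with `i ≤ j`, then either
`[k p_i, (k+1) p_i) ⊆ Per_{p_j}(z)` or `J(j,k') ∩ [k p_i, (k+1) p_i) = J(i,k)`. -/
theorem oxtoby_piece_dichotomy {X : Type*} [MetricSpace X] [CompactSpace X]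
    (x : ℕ → X) (p : ℕ → ℕ) (hp : FastGrowing p)
    (i j : ℕ) (hij : i ≤ j) (k k' : ℤ)
    (hsub : Set.Ico (k * (p i : ℤ)) ((k + 1) * (p i : ℤ)) ⊆
      Set.Ico (k' * (p j : ℤ)) ((k' + 1) * (p j : ℤ))) :
    Set.Ico (k * (p i : ℤ)) ((k + 1) * (p i : ℤ)) ⊆ PerSet (p j) (oxtoby p x) ∨
      oxJ p j k' ∩ Set.Ico (k * (p i : ℤ)) ((k + 1) * (p i : ℤ)) = oxJ p i k := by
  exact ox_main x p hp i j hij k k' hsub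
end

section
/- Let (X,f) and (Y,g) be minimal compact systems. The following are equivalent: (1) (X,f) and (Y,g) are conjugate; (2) there exist x ∈ X and y ∈ Y such that for every sequence of integers (n_k), (f^{n_k}(x)) converges if and only if (g^{n_k}(y)) converges; (3) there exist x ∈ X and y ∈ Y such that the sequences (f^n(x))_{n∈ℕ} and (g^n(y))_{n∈ℕ} have the same topological type. -/
open Filter Topology

/-!
Pair the forward orbits into `w k = (f^k x, g^k y)` and let `G ⊆ X × Y` be the set of cluster
points of `w`. It is closed and `(f × g)`-invariant. The cluster set of a forward orbit is
closed, nonempty and invariant under `f` and `f⁻¹`, so by minimality it is all of `X` (likewise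
for `Y`); with the same topological type this makes both projections of `G` onto. If
`(a, b), (a, b') ∈ G`, a subsequence of `w` alternating between the two points has a convergent
first coordinate, so its second coordinate converges too and `b = b'`. Thus `G` is the graph of a
bijection `X → Y`, which is a homeomorphism since the graph is closed and the spaces are compact,
and a conjugacy since `G` is invariant. Restricting (2) to increasing sequences of naturals
gives (3), and a conjugacy `h` transports (2) from `x` to `h x`.
-/

section Iterates

variable {X Y : Type*} [TopologicalSpace X] [TopologicalSpace Y]

theorem iterZ_add_one (f : X ≃ₜ X) (m : ℤ) (a : X) : iterZ f (m + 1) a = f (iterZ f m a) := by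
  rw [iterZ, add_comm, zpow_add, zpow_one]
  rfl

theorem iterZ_sub_one (f : X ≃ₜ X) (m : ℤ) (a : X) :
    iterZ f (m - 1) a = f.symm (iterZ f m a) := by
  rw [f.eq_symm_apply, ← iterZ_add_one, sub_add_cancel]

theorem apply_iterZ_of_semiconj {f : X ≃ₜ X} {g : Y ≃ₜ Y} (h : X ≃ₜ Y)
    (hh : ∀ a, h (f a) = g (h a)) (m : ℤ) (a : X) : h (iterZ f m a) = iterZ g m (h a) := by
  have hconj : h.toEquiv.permCongrHom f.toEquiv = g.toEquiv :=
    Equiv.ext fun b => by simp [Equiv.permCongr_apply, hh]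
  have := congrArg (· (h a)) (map_zpow h.toEquiv.permCongrHom f.toEquiv m)
  simpa [iterZ, hconj, Equiv.permCongr_apply] using this

theorem Homeomorph.exists_tendsto_comp_iff {ι : Type*} (h : X ≃ₜ Y) {s : ι → X}
    {l : Filter ι} :
    (∃ a, Tendsto s l (𝓝 a)) ↔ ∃ b, Tendsto (fun i => h (s i)) l (𝓝 b) :=
  ⟨fun ⟨a, ha⟩ => ⟨h a, (h.continuous.tendsto a).comp ha⟩,
    fun ⟨b, hb⟩ => ⟨h.symm b, by
      simpa [Function.comp_def] using (h.symm.continuous.tendsto b).comp hb⟩⟩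

theorem exists_tendsto_iterZ_iff_of_semiconj {f : X ≃ₜ X} {g : Y ≃ₜ Y} (h : X ≃ₜ Y)
    (hh : ∀ a, h (f a) = g (h a)) (x : X) (n : ℕ → ℤ) :
    (∃ l, Tendsto (fun k => iterZ f (n k) x) atTop (𝓝 l)) ↔
      ∃ l, Tendsto (fun k => iterZ g (n k) (h x)) atTop (𝓝 l) := by
  simp_rw [← apply_iterZ_of_semiconj h hh]
  exact h.exists_tendsto_comp_iff

end Iterates

section ClusterPoints

variable {Z : Type*} [TopologicalSpace Z]

theorem MapClusterPt.apply_of_comp_add {w : ℕ → Z} {F : Z → Z} {p : Z} {i j : ℕ}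
    (hF : ContinuousAt F p) (hw : ∀ k, F (w (k + i)) = w (k + j))
    (hp : MapClusterPt p atTop w) : MapClusterPt (F p) atTop w := by
  have hshift : MapClusterPt p atTop (w ∘ (· + i)) := by
    rwa [mapClusterPt_comp, map_add_atTop_eq_nat]
  have := hshift.continuousAt_comp hF
  rwa [show F ∘ w ∘ (· + i) = w ∘ (· + j) from funext hw, mapClusterPt_comp,
    map_add_atTop_eq_nat] at this

theorem Filter.Tendsto.of_even_of_odd {α : Type*} {s : ℕ → α} {l : Filter α}
    (h₀ : Tendsto (fun j => s (2 * j)) atTop l)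
    (h₁ : Tendsto (fun j => s (2 * j + 1)) atTop l) : Tendsto s atTop l := by
  intro U hU
  obtain ⟨N, hN⟩ := eventually_atTop.1 ((h₀.eventually_mem hU).and (h₁.eventually_mem hU))
  refine mem_atTop_sets.2 ⟨2 * N, fun k hk => ?_⟩
  obtain ⟨j, rfl | rfl⟩ := Nat.even_or_odd' k
  · exact (hN j (by omega)).1
  · exact (hN j (by omega)).2

theorem exists_strictMono_tendsto_even_odd [FirstCountableTopology Z] {w : ℕ → Z} {p q : Z}
    (hp : MapClusterPt p atTop w) (hq : MapClusterPt q atTop w) :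
    ∃ χ : ℕ → ℕ, StrictMono χ ∧ Tendsto (fun j => w (χ (2 * j))) atTop (𝓝 p) ∧
      Tendsto (fun j => w (χ (2 * j + 1))) atTop (𝓝 q) := by
  obtain ⟨s, hs⟩ := (𝓝 p).exists_antitone_basis
  obtain ⟨t, ht⟩ := (𝓝 q).exists_antitone_basis
  have hfreq : ∀ j, ∃ᶠ k in atTop, w k ∈ (if j % 2 = 0 then s else t) (j / 2) := by
    intro j
    split_ifs
    · exact hp.frequently (hs.mem _)
    · exact hq.frequently (ht.mem _)
  obtain ⟨χ, hχ, hmem⟩ := extraction_forall_of_frequently hfreq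
  refine ⟨χ, hχ, hs.tendsto fun j => ?_, ht.tendsto fun j => ?_⟩
  · simpa using hmem (2 * j)
  · simpa [Nat.add_mod, show (2 * j + 1) / 2 = j by omega] using hmem (2 * j + 1)

theorem mapClusterPt_iterZ_of_dense [CompactSpace Z] (f : Z ≃ₜ Z)
    (hf : ∀ a : Z, Dense (Set.range fun n : ℤ => iterZ f n a)) (x a : Z) :
    MapClusterPt a atTop fun k : ℕ => iterZ f k x := by
  set Ω := {b | MapClusterPt b atTop fun k : ℕ => iterZ f k x}
  have hf_mem : ∀ b ∈ Ω, f b ∈ Ω := fun b hb =>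
    hb.apply_of_comp_add (i := 0) (j := 1) f.continuous.continuousAt
      fun k => by simp [iterZ_add_one]
  have hf_symm_mem : ∀ b ∈ Ω, f.symm b ∈ Ω := fun b hb =>
    hb.apply_of_comp_add (i := 1) (j := 0) f.symm.continuous.continuousAt
      fun k => by simp [iterZ_add_one]
  obtain ⟨b, hb⟩ := exists_clusterPt_of_compactSpace (map (fun k : ℕ => iterZ f k x) atTop)
  have horbit : Set.range (fun n : ℤ => iterZ f n b) ⊆ Ω := by
    rintro _ ⟨n, rfl⟩
    induction n using Int.induction_on with
    | zero => exact hb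
    | succ n ih => simpa only [iterZ_add_one] using hf_mem _ ih
    | pred n ih => simpa only [iterZ_sub_one] using hf_symm_mem _ ih
  exact closure_minimal horbit isClosed_setOfPred_clusterPt
    ((hf b).closure_eq ▸ Set.mem_univ a)

end ClusterPoints

section TopType

variable {X Y : Type*} [TopologicalSpace X] [TopologicalSpace Y] {u : ℕ → X} {v : ℕ → Y}

theorem sameTopType_of_forall_exists_tendsto_iff {u : ℤ → X} {v : ℤ → Y}
    (h : ∀ n : ℕ → ℤ, (∃ l, Tendsto (fun k => u (n k)) atTop (𝓝 l)) ↔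
      ∃ l, Tendsto (fun k => v (n k)) atTop (𝓝 l)) :
    SameTopType (fun n : ℕ => u n) (fun n : ℕ => v n) :=
  fun φ _ => h fun k => φ k

theorem SameTopType.symm (h : SameTopType u v) : SameTopType v u :=
  fun φ hφ => (h φ hφ).symm

theorem mapClusterPt_prod_swap {ι : Type*} {l : Filter ι} {u : ι → X} {v : ι → Y} {a : X}
    {b : Y} : MapClusterPt (a, b) l (fun k => (u k, v k)) ↔
      MapClusterPt (b, a) l (fun k => (v k, u k)) :=
  ⟨fun h => h.continuousAt_comp continuous_swap.continuousAt,
    fun h => h.continuousAt_comp continuous_swap.continuousAt⟩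

theorem SameTopType.exists_mapClusterPt_prod [FirstCountableTopology X] (h : SameTopType u v)
    {a : X} (ha : MapClusterPt a atTop u) :
    ∃ b, MapClusterPt (a, b) atTop fun k => (u k, v k) := by
  obtain ⟨φ, hφ, hu⟩ := ha.tendsto_subseq
  obtain ⟨b, hv⟩ := (h φ hφ).1 ⟨a, hu⟩
  exact ⟨b, (hu.prodMk_nhds hv).mapClusterPt.of_comp hφ.tendsto_atTop⟩

theorem SameTopType.eq_of_mapClusterPt_prod [FirstCountableTopology X] [FirstCountableTopology Y]
    [T2Space Y] (h : SameTopType u v) {a : X} {b b' : Y}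
    (hb : MapClusterPt (a, b) atTop fun k => (u k, v k))
    (hb' : MapClusterPt (a, b') atTop fun k => (u k, v k)) : b = b' := by
  obtain ⟨χ, hχ, hev, hodd⟩ := exists_strictMono_tendsto_even_odd hb hb'
  obtain ⟨c, hc⟩ := (h χ hχ).1 ⟨a, hev.fst_nhds.of_even_of_odd hodd.fst_nhds⟩
  have hbc : b = c := tendsto_nhds_unique hev.snd_nhds
    (hc.comp (StrictMono.tendsto_atTop fun i j (hij : i < j) => show 2 * i < 2 * j by omega))
  have hbc' : b' = c := tendsto_nhds_unique hodd.snd_nhds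
    (hc.comp (StrictMono.tendsto_atTop fun i j (hij : i < j) =>
      show 2 * i + 1 < 2 * j + 1 by omega))
  rw [hbc, hbc']

end TopType

section Graph

variable {X Y : Type*} [TopologicalSpace X] [TopologicalSpace Y]

theorem continuous_of_isClosed_graph [CompactSpace Y] {h : X → Y}
    (hG : IsClosed {p : X × Y | p.2 = h p.1}) : Continuous h := by
  refine continuous_iff_isClosed.2 fun C hC => ?_
  have hpre : h ⁻¹' C = Prod.fst '' ({p : X × Y | p.2 = h p.1} ∩ Set.univ ×ˢ C) := by
    ext a
    simp
  rw [hpre]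
  exact isClosedMap_fst_of_compactSpace _ (hG.inter (isClosed_univ.prod hC))

theorem exists_semiconj_of_isClosed_graph [CompactSpace X] [CompactSpace Y] [T2Space Y]
    {f : X → X} {g : Y → Y} {G : Set (X × Y)} (hG : IsClosed G)
    (hX : ∀ a, ∃! b, (a, b) ∈ G) (hY : ∀ b, ∃! a, (a, b) ∈ G)
    (hfg : ∀ p ∈ G, (f p.1, g p.2) ∈ G) : ∃ h : X ≃ₜ Y, ∀ a, h (f a) = g (h a) := by
  choose h hGh huniq using hX
  have hgraph : G = {p : X × Y | p.2 = h p.1} := by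
    ext ⟨a, b⟩
    exact ⟨huniq a b, fun (hb : b = h a) => hb ▸ hGh a⟩
  have hbij : Function.Bijective h :=
    ⟨fun a a' e => (hY (h a)).unique (hGh a) (e ▸ hGh a'),
      fun b => (hY b).exists.imp fun a ha => (huniq a b ha).symm⟩
  have hcont : Continuous h := continuous_of_isClosed_graph (hgraph ▸ hG)
  exact ⟨hcont.homeoOfEquivCompactToT2 (f := Equiv.ofBijective h hbij),
    fun a => (huniq _ _ (hfg _ (hGh a))).symm⟩

end Graph

theorem exists_semiconj_of_sameTopType {X Y : Type*} [TopologicalSpace X] [CompactSpace X]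
    [FirstCountableTopology X] [T2Space X] [TopologicalSpace Y] [CompactSpace Y]
    [FirstCountableTopology Y] [T2Space Y] (f : X ≃ₜ X) (g : Y ≃ₜ Y)
    (hf : ∀ a : X, Dense (Set.range fun n : ℤ => iterZ f n a))
    (hg : ∀ b : Y, Dense (Set.range fun n : ℤ => iterZ g n b)) {x : X} {y : Y}
    (hxy : SameTopType (fun n : ℕ => iterZ f n x) (fun n : ℕ => iterZ g n y)) :
    ∃ h : X ≃ₜ Y, ∀ a, h (f a) = g (h a) := by
  refine exists_semiconj_of_isClosed_graph
    (G := {p | MapClusterPt p atTop fun k : ℕ => (iterZ f k x, iterZ g k y)})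
    isClosed_setOfPred_clusterPt (fun a => ?_) (fun b => ?_) (fun p hp => ?_)
  · obtain ⟨b, hb⟩ := hxy.exists_mapClusterPt_prod (mapClusterPt_iterZ_of_dense f hf x a)
    exact ⟨b, hb, fun b' hb' => hxy.eq_of_mapClusterPt_prod hb' hb⟩
  · obtain ⟨a, ha⟩ :=
      hxy.symm.exists_mapClusterPt_prod (mapClusterPt_iterZ_of_dense g hg y b)
    exact ⟨a, mapClusterPt_prod_swap.2 ha, fun a' ha' =>
      hxy.symm.eq_of_mapClusterPt_prod (mapClusterPt_prod_swap.1 ha') ha⟩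
  · exact hp.apply_of_comp_add (F := Prod.map f g) (i := 0) (j := 1)
      (f.continuous.prodMap g.continuous).continuousAt fun k => by simp [iterZ_add_one]

theorem min_conjugacy_iff_general {X Y : Type*}
    [MetricSpace X] [CompactSpace X] [Nonempty X] [MetricSpace Y] [CompactSpace Y]
    (f : X ≃ₜ X) (g : Y ≃ₜ Y)
    (hf : ∀ a : X, Dense (Set.range fun n : ℤ => iterZ f n a))
    (hg : ∀ b : Y, Dense (Set.range fun n : ℤ => iterZ g n b)) :
    ((∃ h : X ≃ₜ Y, ∀ a : X, h (f a) = g (h a)) ↔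
      (∃ x : X, ∃ y : Y, ∀ n : ℕ → ℤ,
        (∃ l, Tendsto (fun k => iterZ f (n k) x) atTop (𝓝 l)) ↔
          (∃ l, Tendsto (fun k => iterZ g (n k) y) atTop (𝓝 l)))) ∧
    ((∃ h : X ≃ₜ Y, ∀ a : X, h (f a) = g (h a)) ↔
      (∃ x : X, ∃ y : Y,
        SameTopType (fun n : ℕ => iterZ f (n : ℤ) x) (fun n : ℕ => iterZ g (n : ℤ) y))) := by
  obtain ⟨x₀⟩ := ‹Nonempty X›
  have two_to_three := fun (x : X) (y : Y) =>
    sameTopType_of_forall_exists_tendsto_iff (u := (iterZ f · x)) (v := (iterZ g · y))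
  have one_to_two := fun (h : X ≃ₜ Y) (hh : ∀ a, h (f a) = g (h a)) =>
    exists_tendsto_iterZ_iff_of_semiconj h hh x₀
  exact ⟨⟨fun ⟨h, hh⟩ => ⟨x₀, h x₀, one_to_two h hh⟩,
      fun ⟨x, y, hxy⟩ => exists_semiconj_of_sameTopType f g hf hg (two_to_three x y hxy)⟩,
    ⟨fun ⟨h, hh⟩ => ⟨x₀, h x₀, two_to_three _ _ (one_to_two h hh)⟩,
      fun ⟨_, _, hxy⟩ => exists_semiconj_of_sameTopType f g hf hg hxy⟩⟩

/-- Lemma `min2`: minimal compact systems `(X,f)` and `(Y,g)` are conjugate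
iff (2) there are points `x, y` with the same convergence behaviour along all integer
sequences, iff (3) there are points whose forward orbits have the same topological
type. -/
theorem min_conjugacy_iff {X Y : Type*}
    [MetricSpace X] [CompactSpace X] [Nonempty X] [MetricSpace Y] [CompactSpace Y]
    [Nonempty Y]
    (f : X ≃ₜ X) (g : Y ≃ₜ Y)
    (hf : ∀ a : X, Dense (Set.range fun n : ℤ => iterZ f n a))
    (hg : ∀ b : Y, Dense (Set.range fun n : ℤ => iterZ g n b)) :
    ((∃ h : X ≃ₜ Y, ∀ a : X, h (f a) = g (h a)) ↔
      (∃ x : X, ∃ y : Y, ∀ n : ℕ → ℤ,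
        (∃ l, Tendsto (fun k => iterZ f (n k) x) atTop (𝓝 l)) ↔
          (∃ l, Tendsto (fun k => iterZ g (n k) y) atTop (𝓝 l)))) ∧
    ((∃ h : X ≃ₜ Y, ∀ a : X, h (f a) = g (h a)) ↔
      (∃ x : X, ∃ y : Y,
        SameTopType (fun n : ℕ => iterZ f (n : ℤ) x) (fun n : ℕ => iterZ g (n : ℤ) y))) :=
  min_conjugacy_iff_general f g hf hg
end
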